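/- Define f : [0,1] → ℝ by f(x) = Σ_{i=1}^∞ x_i · 2^(Σ_{j=1}^{i−1} x_j) · 3^(−i) for a binary expansion x = Σ x_i/2^i (using the terminating expansion at dyadic rationals). Then f satisfies f(x) = (1/3)·f(2x) for 0 ≤ x < 1/2 and f(x) = (2/3)·f(2x−1) + 1/3 for 1/2 ≤ x ≤ 1; consequently f equals Salem's singular function L_{1/3}. -/
import Mathlib

/-- The `i`-th binary digit of `x` (indices from 1), using the terminating
(floor) expansion at dyadic rationals. -/
noncomputable def binDigit (x : ℝ) (i : ℕ) : ℕ := ⌊x * 2 ^ i⌋.toNat % 2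

/-- The function `f_{S90}(x) = Σ_{i≥1} x_i · 2^(Σ_{j<i} x_j) · 3^{-i}` obtained
by normalizing cumulative counts of nonzero states of Rule 90 (with `f(1) = 1`,
corresponding to the all-ones expansion of `1`). -/
noncomputable def fS90 (x : ℝ) : ℝ :=
  if x = 1 then 1 else
    ∑' i : ℕ, (binDigit x (i + 1) : ℝ) *
      2 ^ (∑ j ∈ Finset.Icc 1 i, binDigit x j) * (1 / 3 : ℝ) ^ (i + 1)

noncomputable def fterm (x : ℝ) (i : ℕ) : ℝ :=
  (binDigit x (i + 1) : ℝ) * 2 ^ (∑ j ∈ Finset.Icc 1 i, binDigit x j) * (1 / 3 : ℝ) ^ (i + 1)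

lemma binDigit_le_one (x : ℝ) (i : ℕ) : binDigit x i ≤ 1 :=
  Nat.lt_succ_iff.mp (Nat.mod_lt _ (by norm_num))

lemma sum_digits_le (x : ℝ) (i : ℕ) : (∑ j ∈ Finset.Icc 1 i, binDigit x j) ≤ i := by
  calc ∑ j ∈ Finset.Icc 1 i, binDigit x j ≤ ∑ j ∈ Finset.Icc 1 i, 1 :=
        Finset.sum_le_sum (fun j _ => binDigit_le_one x j)
    _ = i := by simp

lemma fterm_nonneg (x : ℝ) (i : ℕ) : 0 ≤ fterm x i := by
  unfold fterm; positivity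

lemma fterm_le (x : ℝ) (i : ℕ) : fterm x i ≤ (1/3) * (2/3)^i := by
  have h1 : (binDigit x (i+1) : ℝ) ≤ 1 := by exact_mod_cast binDigit_le_one x (i+1)
  have h2 : (2:ℝ) ^ (∑ j ∈ Finset.Icc 1 i, binDigit x j) ≤ 2 ^ i :=
    pow_le_pow_right₀ (by norm_num) (sum_digits_le x i)
  have h3 : fterm x i ≤ 1 * 2 ^ i * (1/3:ℝ)^(i+1) := by
    unfold fterm
    exact mul_le_mul_of_nonneg_right (mul_le_mul h1 h2 (by positivity) one_pos.le)
      (by positivity)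
  calc fterm x i ≤ 1 * 2^i * (1/3:ℝ)^(i+1) := h3
    _ = (1/3) * (2/3)^i := by
        rw [div_pow, div_pow, pow_succ]
        ring

lemma summable_fterm (x : ℝ) : Summable (fterm x) :=
  Summable.of_nonneg_of_le (fterm_nonneg x) (fterm_le x)
    ((summable_geometric_of_lt_one (by norm_num) (by norm_num)).mul_left _)

lemma fS90_eq_tsum (x : ℝ) (hx : x ≠ 1) : fS90 x = ∑' i, fterm x i := by
  simp [fS90, fterm, hx]

lemma abs_fS90_le (x : ℝ) : |fS90 x| ≤ 1 := by
  by_cases hx : x = 1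
  · simp [fS90, hx]
  · rw [fS90_eq_tsum x hx, abs_of_nonneg (tsum_nonneg (fterm_nonneg x))]
    have := Summable.tsum_le_tsum (fterm_le x) (summable_fterm x)
      ((summable_geometric_of_lt_one (by norm_num) (by norm_num)).mul_left (1/3 : ℝ))
    calc ∑' i, fterm x i ≤ ∑' i : ℕ, (1/3 : ℝ) * (2/3)^i := this
      _ = (1/3) * (1 - 2/3)⁻¹ := by
          rw [tsum_mul_left, tsum_geometric_of_lt_one (by norm_num) (by norm_num)]
      _ = 1 := by norm_num

lemma binDigit_shift (x : ℝ) (i : ℕ) : binDigit x (i+1) = binDigit (2*x) i := by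
  unfold binDigit
  have : x * 2^(i+1) = 2*x*2^i := by ring
  rw [this]

lemma binDigit_shift' (x : ℝ) (hx : 1/2 ≤ x) (i : ℕ) :
    binDigit x (i+2) = binDigit (2*x-1) (i+1) := by
  unfold binDigit
  have h1 : x * 2^(i+2) = (2*x-1)*2^(i+1) + ((2:ℤ)^(i+1) : ℤ) := by push_cast; ring
  rw [h1, Int.floor_add_intCast]
  have h0 : (0:ℤ) ≤ ⌊(2*x-1)*2^(i+1)⌋ :=
    Int.floor_nonneg.mpr (mul_nonneg (by linarith) (by positivity))
  rw [Int.toNat_add h0 (by positivity)]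
  have h2 : ((2:ℤ)^(i+1)).toNat = 2 * 2^i := by
    rw [show ((2:ℤ)^(i+1)) = ((2^(i+1) : ℕ) : ℤ) by push_cast; ring, Int.toNat_natCast,
      pow_succ']
  rw [h2, Nat.add_mul_mod_self_left]

lemma binDigit_one_of_lt (x : ℝ) (h0 : 0 ≤ x) (h1 : x < 1/2) : binDigit x 1 = 0 := by
  unfold binDigit
  rw [show ⌊x * 2^1⌋ = 0 from Int.floor_eq_zero_iff.mpr ⟨by nlinarith, by nlinarith⟩]
  simp

lemma binDigit_one_of_ge (x : ℝ) (h0 : 1/2 ≤ x) (h1 : x < 1) : binDigit x 1 = 1 := by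
  unfold binDigit
  rw [show ⌊x * 2^1⌋ = 1 from Int.floor_eq_iff.mpr
    ⟨by push_cast; nlinarith, by push_cast; nlinarith⟩]
  simp

lemma sum_shift (x y : ℝ) (hs : ∀ k, binDigit x (k+2) = binDigit y (k+1)) (m : ℕ) :
    ∑ j ∈ Finset.Icc 1 (m+1), binDigit x j
      = binDigit x 1 + ∑ j ∈ Finset.Icc 1 m, binDigit y j := by
  rw [← Finset.Ico_add_one_right_eq_Icc, ← Finset.Ico_add_one_right_eq_Icc, Finset.sum_Ico_eq_sum_range,
    Finset.sum_Ico_eq_sum_range]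
  simp only [Nat.add_sub_cancel, Nat.succ_sub_one]
  rw [Finset.sum_range_succ']
  have h1 : ∀ k, binDigit x (1 + (k+1)) = binDigit y (1 + k) := by
    intro k
    rw [show 1 + (k+1) = k + 2 by ring, hs k, show k + 1 = 1 + k by ring]
  rw [Finset.sum_congr rfl (fun k _ => h1 k)]
  ring

lemma fS90_left (x : ℝ) (hx : x ∈ Set.Ico (0:ℝ) (1/2)) :
    fS90 x = (1/3) * fS90 (2 * x) := by
  obtain ⟨h0, h1⟩ := hx
  have hx1 : x ≠ 1 := by intro h; rw [h] at h1; norm_num at h1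
  have h2x1 : 2 * x ≠ 1 := by intro h; nlinarith [h]
  have hd1 : binDigit x 1 = 0 := binDigit_one_of_lt x h0 h1
  have hs : ∀ k, binDigit x (k+2) = binDigit (2*x) (k+1) := fun k => binDigit_shift x (k+1)
  have hterm : ∀ m, fterm x (m+1) = (1/3) * fterm (2*x) m := by
    intro m
    unfold fterm
    rw [show m + 1 + 1 = (m+1) + 1 by ring, binDigit_shift x (m+1),
      sum_shift x (2*x) hs m, hd1, pow_succ]
    ring
  rw [fS90_eq_tsum x hx1, fS90_eq_tsum (2*x) h2x1,
    Summable.tsum_eq_zero_add (summable_fterm x)]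
  have ht0 : fterm x 0 = 0 := by
    unfold fterm
    rw [show (0:ℕ) + 1 = 1 from rfl, hd1]
    norm_num
  rw [ht0, zero_add]
  calc (∑' m : ℕ, fterm x (m+1)) = ∑' m : ℕ, (1/3) * fterm (2*x) m := by
        exact tsum_congr hterm
    _ = (1/3) * ∑' m, fterm (2*x) m := tsum_mul_left

lemma fS90_right (x : ℝ) (hx : x ∈ Set.Icc (1/2:ℝ) 1) :
    fS90 x = (2/3) * fS90 (2 * x - 1) + 1/3 := by
  obtain ⟨h0, h1⟩ := hx
  by_cases hx1 : x = 1
  · subst hx1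
    norm_num [fS90]
  have h1' : x < 1 := lt_of_le_of_ne h1 hx1
  have h2x1 : 2 * x - 1 ≠ 1 := by intro h; apply hx1; linarith [h]
  have hd1 : binDigit x 1 = 1 := binDigit_one_of_ge x h0 h1'
  have hs : ∀ k, binDigit x (k+2) = binDigit (2*x-1) (k+1) := fun k => binDigit_shift' x h0 k
  have hterm : ∀ m, fterm x (m+1) = (2/3) * fterm (2*x-1) m := by
    intro m
    unfold fterm
    rw [show m + 1 + 1 = m + 2 by ring, hs m, sum_shift x (2*x-1) hs m, hd1, pow_succ,
      pow_add]
    ring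
  rw [fS90_eq_tsum x hx1, fS90_eq_tsum (2*x-1) h2x1,
    Summable.tsum_eq_zero_add (summable_fterm x)]
  have ht0 : fterm x 0 = 1/3 := by
    unfold fterm
    rw [show (0:ℕ) + 1 = 1 from rfl, hd1]
    norm_num
  rw [ht0]
  have : (∑' m : ℕ, fterm x (m+1)) = (2/3) * ∑' m, fterm (2*x-1) m := by
    rw [tsum_congr hterm, tsum_mul_left]
  rw [this]
  ring

/-- `f_{S90}` satisfies the de Rham functional equation with parameter `1/3`,
hence equals Salem's singular function `L_{1/3}`. -/
theorem fS90_eq_salem :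
    (∀ x ∈ Set.Ico (0:ℝ) (1/2), fS90 x = (1/3) * fS90 (2 * x)) ∧
    (∀ x ∈ Set.Icc (1/2:ℝ) 1, fS90 x = (2/3) * fS90 (2 * x - 1) + 1/3) ∧
    (∀ L : ℝ → ℝ, ContinuousOn L (Set.Icc 0 1) →
      (∀ x ∈ Set.Ico (0:ℝ) (1/2), L x = (1/3) * L (2 * x)) →
      (∀ x ∈ Set.Icc (1/2:ℝ) 1, L x = (2/3) * L (2 * x - 1) + 1/3) →
      ∀ x ∈ Set.Icc (0:ℝ) 1, fS90 x = L x) := by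
  refine ⟨fS90_left, fS90_right, ?_⟩
  intro L hL hL1 hL2 x hx
  -- L is bounded on [0,1]
  obtain ⟨C, hC⟩ := (isCompact_Icc (a := (0:ℝ)) (b := 1)).exists_bound_of_continuousOn hL
  set M : ℝ := 1 + max C 0 with hM
  have hM0 : 0 ≤ M := by positivity
  have hbound : ∀ y ∈ Set.Icc (0:ℝ) 1, |fS90 y - L y| ≤ M := by
    intro y hy
    calc |fS90 y - L y| ≤ |fS90 y| + |L y| := abs_sub _ _
      _ ≤ 1 + max C 0 := add_le_add (abs_fS90_le y)
          (le_trans (hC y hy) (le_max_left _ _))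
  have key : ∀ n : ℕ, ∀ y ∈ Set.Icc (0:ℝ) 1, |fS90 y - L y| ≤ (2/3)^n * M := by
    intro n
    induction n with
    | zero => intro y hy; simpa using hbound y hy
    | succ n ih =>
      intro y hy
      obtain ⟨hy0, hy1⟩ := hy
      by_cases hlt : y < 1/2
      · have hy' : 2 * y ∈ Set.Icc (0:ℝ) 1 := ⟨by linarith, by linarith⟩
        have e1 : fS90 y - L y = (1/3) * (fS90 (2*y) - L (2*y)) := by
          rw [fS90_left y ⟨hy0, hlt⟩, hL1 y ⟨hy0, hlt⟩]; ring
        rw [e1, abs_mul, abs_of_nonneg (by norm_num : (0:ℝ) ≤ 1/3)]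
        calc (1/3) * |fS90 (2*y) - L (2*y)| ≤ (1/3) * ((2/3)^n * M) := by
              have := ih (2*y) hy'
              nlinarith [abs_nonneg (fS90 (2*y) - L (2*y))]
          _ ≤ (2/3)^(n+1) * M := by
              rw [pow_succ]
              nlinarith [pow_nonneg (by norm_num : (0:ℝ) ≤ 2/3) n]
      · have hge : (1/2:ℝ) ≤ y := le_of_not_gt hlt
        have hy' : 2 * y - 1 ∈ Set.Icc (0:ℝ) 1 := ⟨by linarith, by linarith⟩
        have e1 : fS90 y - L y = (2/3) * (fS90 (2*y-1) - L (2*y-1)) := by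
          rw [fS90_right y ⟨hge, hy1⟩, hL2 y ⟨hge, hy1⟩]; ring
        rw [e1, abs_mul, abs_of_nonneg (by norm_num : (0:ℝ) ≤ 2/3)]
        rw [pow_succ, mul_comm ((2/3:ℝ)^n) (2/3), mul_assoc]
        exact mul_le_mul_of_nonneg_left (ih (2*y-1) hy') (by norm_num)
  have htend : Filter.Tendsto (fun n : ℕ => (2/3:ℝ)^n * M) Filter.atTop (nhds 0) := by
    have := tendsto_pow_atTop_nhds_zero_of_lt_one (by norm_num : (0:ℝ) ≤ 2/3)
      (by norm_num : (2/3:ℝ) < 1)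
    simpa using this.mul_const M
  have habs : |fS90 x - L x| ≤ 0 :=
    ge_of_tendsto' htend (fun n => key n x hx)
  have : fS90 x - L x = 0 := abs_eq_zero.mp (le_antisymm habs (abs_nonneg _))
  linarith
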